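/- Let k ≥ 2 be an integer and set V(t) = ( t(1 + (1 + 1/k)² t)/(1 − t) )^{1/(k+1)} for t ∈ (0,1). Then ∫₀¹ (1 − 2(1 + 1/k)t)/V(t) dt = ∫₀¹ (k+1)²(1−t)t/( k((k+1)²t + k²) V(t) ) dt, and in particular ∫₀¹ (1 − 2(1 + 1/k)t)/V(t) dt > 0. -/

import Mathlib

open Real MeasureTheory Set intervalIntegral Filter
open scoped Interval

noncomputable def Vfn (k : ℕ) (t : ℝ) : ℝ :=
  (t * (1 + (1 + 1 / (k : ℝ)) ^ 2 * t) / (1 - t)) ^ ((1 : ℝ) / ((k : ℝ) + 1))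

namespace VAux

open Topology

noncomputable def W (k : ℕ) (t : ℝ) : ℝ := t * (1 + (1 + 1 / (k : ℝ)) ^ 2 * t) / (1 - t)

noncomputable def Wd (k : ℕ) (t : ℝ) : ℝ :=
  ((1 * (1 + (1 + 1 / (k : ℝ)) ^ 2 * t) + t * ((1 + 1 / (k : ℝ)) ^ 2 * 1)) * (1 - t) -
      t * (1 + (1 + 1 / (k : ℝ)) ^ 2 * t) * (-1)) / (1 - t) ^ 2

lemma Vfn_def (k : ℕ) (t : ℝ) : Vfn k t = W k t ^ ((1 : ℝ) / ((k : ℝ) + 1)) := rfl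

lemma W_pos {k : ℕ} {t : ℝ} (ht : t ∈ Ioo (0 : ℝ) 1) : 0 < W k t := by
  have h1 : (0:ℝ) < 1 - t := by linarith [ht.2]
  have h2 : (0:ℝ) < 1 + (1 + 1 / (k : ℝ)) ^ 2 * t := by
    nlinarith [mul_nonneg (sq_nonneg (1 + 1 / (k : ℝ))) ht.1.le]
  exact div_pos (mul_pos ht.1 h2) h1

lemma W_ge {k : ℕ} {t : ℝ} (ht : t ∈ Ioo (0 : ℝ) 1) : t ≤ W k t := by
  have h1 : (0:ℝ) < 1 - t := by linarith [ht.2]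
  rw [W, le_div_iff₀ h1]
  nlinarith [mul_nonneg (mul_nonneg (sq_nonneg (1 + 1 / (k : ℝ))) ht.1.le) ht.1.le,
    mul_pos ht.1 ht.1]

lemma Vfn_pos {k : ℕ} {t : ℝ} (ht : t ∈ Ioo (0 : ℝ) 1) : 0 < Vfn k t :=
  Real.rpow_pos_of_pos (W_pos ht) _

lemma Vfn_ge {k : ℕ} {t : ℝ} (ht : t ∈ Ioo (0 : ℝ) 1) :
    t ^ ((1 : ℝ) / ((k : ℝ) + 1)) ≤ Vfn k t :=
  Real.rpow_le_rpow ht.1.le (W_ge ht) (by positivity)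

lemma Vfn_one (k : ℕ) : Vfn k 1 = 0 := by
  simp only [Vfn, sub_self, div_zero]
  exact Real.zero_rpow (by positivity)

lemma hasDerivAt_W {k : ℕ} {t : ℝ} (ht : t ∈ Ioo (0 : ℝ) 1) :
    HasDerivAt (W k) (Wd k t) t := by
  have h1 : (1:ℝ) - t ≠ 0 := sub_ne_zero.mpr ht.2.ne'
  have hnum : HasDerivAt (fun s : ℝ => s * (1 + (1 + 1 / (k : ℝ)) ^ 2 * s))
      (1 * (1 + (1 + 1 / (k : ℝ)) ^ 2 * t) + t * ((1 + 1 / (k : ℝ)) ^ 2 * 1)) t :=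
    (hasDerivAt_id t).mul (((hasDerivAt_id t).const_mul ((1 + 1 / (k : ℝ)) ^ 2)).const_add 1)
  have hden : HasDerivAt (fun s : ℝ => 1 - s) (-1) t := by
    simpa using (hasDerivAt_id t).const_sub 1
  exact hnum.div hden h1

lemma hasDerivAt_Vfn {k : ℕ} {t : ℝ} (ht : t ∈ Ioo (0 : ℝ) 1) :
    HasDerivAt (Vfn k)
      (Wd k t * ((1 : ℝ) / ((k : ℝ) + 1)) * W k t ^ ((1 : ℝ) / ((k : ℝ) + 1) - 1)) t := by
  have := (hasDerivAt_W (k := k) ht).rpow_const (p := (1 : ℝ) / ((k : ℝ) + 1))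
    (Or.inl (W_pos ht).ne')
  exact this

set_option maxHeartbeats 1600000 in
lemma hasDerivAt_H {k : ℕ} (hk : 2 ≤ k) {t : ℝ} (ht : t ∈ Ioo (0 : ℝ) 1) :
    HasDerivAt (fun s => (1 + 1 / (k : ℝ)) * (s * (1 - s)) / Vfn k s)
      ((1 - 2 * (1 + 1 / (k : ℝ)) * t) / Vfn k t -
        ((k : ℝ) + 1) ^ 2 * (1 - t) * t /
          ((k : ℝ) * (((k : ℝ) + 1) ^ 2 * t + (k : ℝ) ^ 2) * Vfn k t)) t := by
  have hK : (2:ℝ) ≤ (k : ℝ) := by exact_mod_cast hk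
  have hK0 : (0:ℝ) < (k : ℝ) := by linarith
  have hK1 : (0:ℝ) < (k : ℝ) + 1 := by linarith
  have hV := Vfn_pos (k := k) ht
  have hW := W_pos (k := k) ht
  have h1t : (0:ℝ) < 1 - t := by linarith [ht.2]
  have hN2 : (0:ℝ) < (k:ℝ)^2 + ((k:ℝ)+1)^2*t := by
    nlinarith [mul_pos (mul_pos hK1 hK1) ht.1]
  have hB : (0:ℝ) < ((k : ℝ) + 1) ^ 2 * t + (k : ℝ) ^ 2 := by
    nlinarith [mul_pos (mul_pos hK1 hK1) ht.1]
  have hden : t * ((k:ℝ)^2 + ((k:ℝ)+1)^2*t) * (1 - t) ≠ 0 :=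
    mul_ne_zero (mul_ne_zero ht.1.ne' hN2.ne') h1t.ne'
  have hQ : Wd k t / W k t =
      (((k:ℝ)^2 + ((k:ℝ)+1)^2*t) * (1-t) + ((k:ℝ)+1)^2 * (t*(1-t)) +
        t * ((k:ℝ)^2 + ((k:ℝ)+1)^2*t)) / (t * ((k:ℝ)^2 + ((k:ℝ)+1)^2*t) * (1 - t)) := by
    rw [div_eq_div_iff hW.ne' hden]
    simp only [W, Wd]
    field_simp
    ring
  have hkey : (1 + 1 / (k : ℝ)) * (t * (1 - t)) *
        (Wd k t * ((1 : ℝ) / ((k : ℝ) + 1)) / W k t) =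
      1 / (k:ℝ) + ((k : ℝ) + 1) ^ 2 * (1 - t) * t /
          ((k : ℝ) * (((k : ℝ) + 1) ^ 2 * t + (k : ℝ) ^ 2)) := by
    rw [mul_div_right_comm, hQ]
    rw [div_eq_div_iff hW.ne' hden] at hQ
    have ht0 : t ≠ 0 := ht.1.ne'
    field_simp
    ring
  have hnum : HasDerivAt (fun s : ℝ => (1 + 1 / (k : ℝ)) * (s * (1 - s)))
      ((1 + 1 / (k : ℝ)) * (1 * (1 - t) + t * (-1))) t := by
    have h2 : HasDerivAt (fun s : ℝ => 1 - s) (-1) t := by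
      simpa using (hasDerivAt_id t).const_sub 1
    exact ((hasDerivAt_id t).mul h2).const_mul _
  have h := hnum.div (hasDerivAt_Vfn ht) hV.ne'
  convert h using 1
  case e'_4 => rfl
  case e'_5 => rfl
  case e'_8 => rfl
  have hWp : W k t ^ ((1 : ℝ) / ((k : ℝ) + 1) - 1) = Vfn k t / W k t := by
    rw [Real.rpow_sub hW, Real.rpow_one, Vfn_def]
  rw [hWp]
  have hD : ((1 + 1 / (k : ℝ)) * (1 * (1 - t) + t * (-1)) * Vfn k t -
        (1 + 1 / (k : ℝ)) * (t * (1 - t)) *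
          (Wd k t * ((1 : ℝ) / ((k : ℝ) + 1)) * (Vfn k t / W k t))) / Vfn k t ^ 2 =
      ((1 + 1 / (k : ℝ)) * (1 * (1 - t) + t * (-1)) -
        (1 + 1 / (k : ℝ)) * (t * (1 - t)) *
          (Wd k t * ((1 : ℝ) / ((k : ℝ) + 1)) / W k t)) / Vfn k t := by
    field_simp
  rw [hD]
  have hT : (1 - 2 * (1 + 1 / (k : ℝ)) * t) / Vfn k t -
        ((k : ℝ) + 1) ^ 2 * (1 - t) * t /
          ((k : ℝ) * (((k : ℝ) + 1) ^ 2 * t + (k : ℝ) ^ 2) * Vfn k t) =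
      ((1 - 2 * (1 + 1 / (k : ℝ)) * t) -
        ((k : ℝ) + 1) ^ 2 * (1 - t) * t /
          ((k : ℝ) * (((k : ℝ) + 1) ^ 2 * t + (k : ℝ) ^ 2))) / Vfn k t := by
    rw [eq_comm, sub_div, div_div]
  rw [hT]
  congr 1
  rw [mul_comm (1 + 1 / (k:ℝ)) (t * (1 - t))] at hkey
  rw [show (1 + 1 / (k:ℝ)) * (t * (1 - t)) * (Wd k t * ((1:ℝ)/((k:ℝ)+1)) / W k t) =
      t * (1 - t) * (1 + 1 / (k:ℝ)) * (Wd k t * ((1:ℝ)/((k:ℝ)+1)) / W k t) by ring, hkey]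
  field_simp
  ring

lemma restrict_uIoc_eq : volume.restrict (Ι (0:ℝ) 1) = volume.restrict (Ioo (0:ℝ) 1) := by
  rw [uIoc_of_le (by norm_num : (0:ℝ) ≤ 1)]
  exact (Measure.restrict_congr_set Ioo_ae_eq_Ioc).symm

lemma W_contOn (k : ℕ) : ContinuousOn (W k) (Ioo (0:ℝ) 1) := by
  apply ContinuousOn.div
  · fun_prop
  · fun_prop
  · exact fun t ht => sub_ne_zero.mpr ht.2.ne'

lemma Vfn_contOn (k : ℕ) : ContinuousOn (Vfn k) (Ioo (0:ℝ) 1) :=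
  (W_contOn k).rpow_const (fun t ht => Or.inl (W_pos ht).ne')

lemma inv_Vfn_le {k : ℕ} {t : ℝ} (ht : t ∈ Ioo (0:ℝ) 1) :
    (Vfn k t)⁻¹ ≤ t ^ (-((1:ℝ)/((k:ℝ)+1))) := by
  have h1 : (0:ℝ) < t ^ ((1:ℝ)/((k:ℝ)+1)) := Real.rpow_pos_of_pos ht.1 _
  rw [Real.rpow_neg ht.1.le]
  exact inv_anti₀ h1 (Vfn_ge ht)

lemma integrable_bound {k : ℕ} (hk : 2 ≤ k) {f : ℝ → ℝ} {C : ℝ} (hC : 0 ≤ C)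
    (hmeas : AEStronglyMeasurable f (volume.restrict (Ι (0:ℝ) 1)))
    (hbound : ∀ t ∈ Ioo (0:ℝ) 1, |f t| ≤ C * t ^ (-((1:ℝ)/((k:ℝ)+1))))
    (hf1 : f 1 = 0) : IntervalIntegrable f volume 0 1 := by
  have hK : (2:ℝ) ≤ (k : ℝ) := by exact_mod_cast hk
  have hK1 : (0:ℝ) < (k:ℝ) + 1 := by linarith
  have hexp : (-1:ℝ) < -((1:ℝ)/((k:ℝ)+1)) := by
    have h : (1:ℝ)/((k:ℝ)+1) < 1 := by rw [div_lt_one hK1]; linarith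
    linarith
  have hg : IntervalIntegrable (fun t : ℝ => C * t ^ (-((1:ℝ)/((k:ℝ)+1)))) volume 0 1 :=
    (intervalIntegral.intervalIntegrable_rpow' hexp).const_mul C
  refine hg.mono_fun' hmeas ?_
  rw [uIoc_of_le (by norm_num : (0:ℝ) ≤ 1)]
  filter_upwards [ae_restrict_mem measurableSet_Ioc] with x hx
  rcases eq_or_lt_of_le hx.2 with h1 | h1
  · subst h1
    simp only [hf1, norm_zero, Real.one_rpow, mul_one]
    exact hC
  · rw [Real.norm_eq_abs]
    exact hbound x ⟨hx.1, h1⟩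

lemma tendsto_H_zero {k : ℕ} (hk : 2 ≤ k) :
    Tendsto (fun t => (1 + 1/(k:ℝ)) * (t*(1-t)) / Vfn k t) (𝓝[>] (0:ℝ)) (𝓝 0) := by
  have hK : (2:ℝ) ≤ (k : ℝ) := by exact_mod_cast hk
  have hK1 : (0:ℝ) < (k:ℝ)+1 := by linarith
  have hp0 : (0:ℝ) < (1:ℝ)/((k:ℝ)+1) := by positivity
  have hp1 : (1:ℝ)/((k:ℝ)+1) < 1 := by rw [div_lt_one hK1]; linarith
  have hc0 : (0:ℝ) < 1 + 1/(k:ℝ) := by positivity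
  refine tendsto_of_tendsto_of_tendsto_of_le_of_le' (g := fun _ => (0:ℝ))
    (h := fun t => (1 + 1/(k:ℝ)) * t ^ (1 - (1:ℝ)/((k:ℝ)+1))) tendsto_const_nhds ?_ ?_ ?_
  · -- upper function tends to 0
    have hc : ContinuousAt (fun t : ℝ => t ^ (1 - (1:ℝ)/((k:ℝ)+1))) 0 :=
      Real.continuousAt_rpow_const 0 _ (Or.inr (by linarith))
    have h2 := (hc.tendsto).mono_left (nhdsWithin_le_nhds (s := Ioi (0:ℝ)))
    rw [Real.zero_rpow (by linarith : (1:ℝ) - (1:ℝ)/((k:ℝ)+1) ≠ 0)] at h2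
    have := h2.const_mul (1 + 1/(k:ℝ))
    simpa using this
  · -- 0 ≤ H
    filter_upwards [Ioo_mem_nhdsGT_of_mem (left_mem_Ico.mpr zero_lt_one)] with t ht
    have hV := Vfn_pos (k := k) ht
    have h1t : (0:ℝ) ≤ 1 - t := by linarith [ht.2]
    exact div_nonneg (mul_nonneg hc0.le (mul_nonneg ht.1.le h1t)) hV.le
  · -- H ≤ upper
    filter_upwards [Ioo_mem_nhdsGT_of_mem (left_mem_Ico.mpr zero_lt_one)] with t ht
    have hV := Vfn_pos (k := k) ht
    have h1t : (0:ℝ) < 1 - t := by linarith [ht.2]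
    have hinv := inv_Vfn_le (k := k) ht
    have step1 : (1 + 1/(k:ℝ)) * (t*(1-t)) / Vfn k t ≤ (1 + 1/(k:ℝ)) * t / Vfn k t :=
      (div_le_div_iff_of_pos_right hV).mpr (by nlinarith [mul_nonneg (mul_nonneg hc0.le ht.1.le) ht.1.le])
    refine step1.trans ?_
    rw [div_eq_mul_inv]
    have step2 : (1 + 1/(k:ℝ)) * t * (Vfn k t)⁻¹ ≤
        (1 + 1/(k:ℝ)) * t * t ^ (-((1:ℝ)/((k:ℝ)+1))) :=
      mul_le_mul_of_nonneg_left hinv (mul_nonneg hc0.le ht.1.le)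
    refine step2.trans_eq ?_
    rw [mul_assoc, show (1:ℝ) - (1:ℝ)/((k:ℝ)+1) = 1 + -((1:ℝ)/((k:ℝ)+1)) by ring,
      Real.rpow_add ht.1, Real.rpow_one]

lemma tendsto_H_one {k : ℕ} (hk : 2 ≤ k) :
    Tendsto (fun t => (1 + 1/(k:ℝ)) * (t*(1-t)) / Vfn k t) (𝓝[<] (1:ℝ)) (𝓝 0) := by
  have hK : (2:ℝ) ≤ (k : ℝ) := by exact_mod_cast hk
  have hK1 : (0:ℝ) < (k:ℝ)+1 := by linarith
  have hp0 : (0:ℝ) < (1:ℝ)/((k:ℝ)+1) := by positivity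
  have hc0 : (0:ℝ) < 1 + 1/(k:ℝ) := by positivity
  set p : ℝ := (1:ℝ)/((k:ℝ)+1) with hpdef
  refine tendsto_of_tendsto_of_tendsto_of_le_of_le' (g := fun _ => (0:ℝ))
    (h := fun t => (1 + 1/(k:ℝ)) * ((1-t) * (2*(1-t)) ^ p)) tendsto_const_nhds ?_ ?_ ?_
  · -- upper function tends to 0
    have h1 : Tendsto (fun t : ℝ => 1 - t) (𝓝[<] (1:ℝ)) (𝓝 0) := by
      have hcont : Continuous (fun t : ℝ => 1 - t) := by fun_prop
      have h2 := (hcont.tendsto 1).mono_left (nhdsWithin_le_nhds (s := Iio (1:ℝ)))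
      simpa using h2
    have hr : ContinuousAt (fun u : ℝ => (2*u) ^ p) 0 := by
      have h2 : ContinuousAt (fun u : ℝ => 2*u) 0 := (continuous_const.mul continuous_id).continuousAt
      have h3 : ContinuousAt (fun v : ℝ => v ^ p) (2*0) :=
        Real.continuousAt_rpow_const _ _ (Or.inr hp0.le)
      exact h3.comp h2
    have h2 : ContinuousAt (fun u : ℝ => (1 + 1/(k:ℝ)) * (u * (2*u) ^ p)) 0 :=
      continuousAt_const.mul (continuousAt_id.mul hr)
    have h4 := h2.tendsto.comp h1
    simp only [Function.comp_def] at h4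
    simpa using h4
  · -- 0 ≤ H
    filter_upwards [Ioo_mem_nhdsLT_of_mem (right_mem_Ioc.mpr (by norm_num : (1:ℝ)/2 < 1))]
      with t ht
    have ht' : t ∈ Ioo (0:ℝ) 1 := ⟨by linarith [ht.1], ht.2⟩
    have hV := Vfn_pos (k := k) ht'
    have h1t : (0:ℝ) ≤ 1 - t := by linarith [ht.2]
    exact div_nonneg (mul_nonneg hc0.le (mul_nonneg ht'.1.le h1t)) hV.le
  · -- H ≤ upper
    filter_upwards [Ioo_mem_nhdsLT_of_mem (right_mem_Ioc.mpr (by norm_num : (1:ℝ)/2 < 1))]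
      with t ht
    have ht' : t ∈ Ioo (0:ℝ) 1 := ⟨by linarith [ht.1], ht.2⟩
    have hV := Vfn_pos (k := k) ht'
    have h1t : (0:ℝ) < 1 - t := by linarith [ht.2]
    have hW2 : (2*(1-t))⁻¹ ≤ W k t := by
      rw [W, le_div_iff₀ h1t]
      have he : (2*(1-t))⁻¹ * (1-t) = 1/2 := by field_simp
      rw [he]
      nlinarith [mul_nonneg (mul_nonneg (sq_nonneg (1 + 1/(k:ℝ))) ht'.1.le) ht'.1.le, ht.1]
    have hBpos : (0:ℝ) < (2*(1-t)) ^ p := Real.rpow_pos_of_pos (by linarith) _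
    have hVlb : ((2*(1-t)) ^ p)⁻¹ ≤ Vfn k t := by
      have := Real.rpow_le_rpow (by positivity) hW2 hp0.le
      rwa [Real.inv_rpow (by linarith : (0:ℝ) ≤ 2*(1-t))] at this
    have hinv : (Vfn k t)⁻¹ ≤ (2*(1-t)) ^ p := by
      have h5 := inv_anti₀ (by positivity) hVlb
      rwa [inv_inv] at h5
    have step1 : (1 + 1/(k:ℝ)) * (t*(1-t)) / Vfn k t ≤ (1 + 1/(k:ℝ)) * (1-t) / Vfn k t :=
      (div_le_div_iff_of_pos_right hV).mpr (by nlinarith [mul_nonneg (mul_nonneg hc0.le h1t.le) h1t.le])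
    refine step1.trans ?_
    rw [div_eq_mul_inv]
    calc (1 + 1/(k:ℝ)) * (1-t) * (Vfn k t)⁻¹
        ≤ (1 + 1/(k:ℝ)) * (1-t) * ((2*(1-t)) ^ p) :=
          mul_le_mul_of_nonneg_left hinv (mul_nonneg hc0.le h1t.le)
      _ = (1 + 1/(k:ℝ)) * ((1-t) * (2*(1-t)) ^ p) := by ring

end VAux

/-- equality of the two integrals involving `V`, and positivity. -/
theorem V_integral_identity (k : ℕ) (hk : 2 ≤ k) :
    (∫ t in (0 : ℝ)..1, (1 - 2 * (1 + 1 / (k : ℝ)) * t) / Vfn k t) =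
      (∫ t in (0 : ℝ)..1,
        ((k : ℝ) + 1) ^ 2 * (1 - t) * t /
          ((k : ℝ) * (((k : ℝ) + 1) ^ 2 * t + (k : ℝ) ^ 2) * Vfn k t)) ∧
    0 < ∫ t in (0 : ℝ)..1, (1 - 2 * (1 + 1 / (k : ℝ)) * t) / Vfn k t := by
  classical
  have hK : (2:ℝ) ≤ (k : ℝ) := by exact_mod_cast hk
  have hK0 : (0:ℝ) < (k:ℝ) := by linarith
  have hK1 : (0:ℝ) < (k:ℝ) + 1 := by linarith
  set f : ℝ → ℝ := fun t => (1 - 2 * (1 + 1 / (k : ℝ)) * t) / Vfn k t with hfdef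
  set g : ℝ → ℝ := fun t => ((k : ℝ) + 1) ^ 2 * (1 - t) * t /
      ((k : ℝ) * (((k : ℝ) + 1) ^ 2 * t + (k : ℝ) ^ 2) * Vfn k t) with hgdef
  -- measurability
  have hfc : ContinuousOn f (Ioo (0:ℝ) 1) := by
    apply ContinuousOn.div (by fun_prop) (VAux.Vfn_contOn k)
    exact fun t ht => (VAux.Vfn_pos ht).ne'
  have hgc : ContinuousOn g (Ioo (0:ℝ) 1) := by
    apply ContinuousOn.div (by fun_prop)
    · exact (ContinuousOn.mul (by fun_prop) (VAux.Vfn_contOn k))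
    · intro t ht
      have hB : (0:ℝ) < ((k : ℝ) + 1) ^ 2 * t + (k : ℝ) ^ 2 := by
        nlinarith [mul_pos (mul_pos hK1 hK1) ht.1]
      exact (mul_pos (mul_pos hK0 hB) (VAux.Vfn_pos ht)).ne'
  have hfm : AEStronglyMeasurable f (volume.restrict (Ι (0:ℝ) 1)) := by
    rw [VAux.restrict_uIoc_eq]
    exact hfc.aestronglyMeasurable measurableSet_Ioo
  have hgm : AEStronglyMeasurable g (volume.restrict (Ι (0:ℝ) 1)) := by
    rw [VAux.restrict_uIoc_eq]
    exact hgc.aestronglyMeasurable measurableSet_Ioo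
  -- integrability
  have hfint : IntervalIntegrable f volume 0 1 := by
    refine VAux.integrable_bound hk (C := 4) (by norm_num) hfm ?_ ?_
    · intro t ht
      have hV := VAux.Vfn_pos (k := k) ht
      have hinv := VAux.inv_Vfn_le (k := k) ht
      have habs : |1 - 2 * (1 + 1 / (k : ℝ)) * t| ≤ 4 := by
        have h1k : (0:ℝ) < 1/(k:ℝ) := by positivity
        have h1k2 : (1:ℝ)/(k:ℝ) ≤ 1 := by rw [div_le_one hK0]; linarith
        rw [abs_le]
        constructor <;> nlinarith [ht.1, ht.2]
      have : |f t| = |1 - 2 * (1 + 1 / (k : ℝ)) * t| * (Vfn k t)⁻¹ := by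
        rw [hfdef]
        simp only []
        rw [abs_div, abs_of_pos hV, div_eq_mul_inv]
      rw [this]
      exact mul_le_mul habs hinv (inv_nonneg.mpr hV.le) (by norm_num)
    · simp [hfdef, VAux.Vfn_one]
  have hgint : IntervalIntegrable g volume 0 1 := by
    refine VAux.integrable_bound hk (C := ((k:ℝ)+1)^2) (by positivity) hgm ?_ ?_
    · intro t ht
      have hV := VAux.Vfn_pos (k := k) ht
      have hinv := VAux.inv_Vfn_le (k := k) ht
      have h1t : (0:ℝ) < 1 - t := by linarith [ht.2]
      have hB : (0:ℝ) < ((k : ℝ) + 1) ^ 2 * t + (k : ℝ) ^ 2 := by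
        nlinarith [mul_pos (mul_pos hK1 hK1) ht.1]
      have hA : (0:ℝ) ≤ ((k : ℝ) + 1) ^ 2 * (1 - t) * t :=
        mul_nonneg (mul_nonneg (by positivity) h1t.le) ht.1.le
      have hg0 : 0 ≤ g t :=
        div_nonneg hA (mul_nonneg (mul_nonneg hK0.le hB.le) hV.le)
      rw [abs_of_nonneg hg0, hgdef]
      simp only []
      rw [show (k : ℝ) * (((k : ℝ) + 1) ^ 2 * t + (k : ℝ) ^ 2) * Vfn k t =
        ((k : ℝ) * (((k : ℝ) + 1) ^ 2 * t + (k : ℝ) ^ 2)) * Vfn k t from rfl, ← div_div,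
        div_eq_mul_inv (_ / _)]
      have hD1 : (1:ℝ) ≤ (k : ℝ) * (((k : ℝ) + 1) ^ 2 * t + (k : ℝ) ^ 2) := by
        nlinarith [mul_pos (mul_pos hK1 hK1) ht.1]
      have hstep : ((k : ℝ) + 1) ^ 2 * (1 - t) * t /
          ((k : ℝ) * (((k : ℝ) + 1) ^ 2 * t + (k : ℝ) ^ 2)) ≤ ((k:ℝ)+1)^2 := by
        rw [div_le_iff₀ (by linarith)]
        nlinarith [ht.1, ht.2, h1t]
      exact mul_le_mul hstep hinv (inv_nonneg.mpr hV.le) (by positivity)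
    · simp [hgdef, VAux.Vfn_one]
  -- FTC
  have hderiv : ∀ t ∈ Ioo (0:ℝ) 1,
      HasDerivAt (fun s => (1 + 1 / (k : ℝ)) * (s * (1 - s)) / Vfn k s) (f t - g t) t :=
    fun t ht => VAux.hasDerivAt_H hk ht
  have hzero : (∫ t in (0:ℝ)..1, (f t - g t)) = 0 := by
    have := intervalIntegral.integral_eq_sub_of_hasDerivAt_of_tendsto (a := 0) (b := 1)
      zero_lt_one hderiv (hfint.sub hgint) (VAux.tendsto_H_zero hk) (VAux.tendsto_H_one hk)
    simpa using this
  have heq : (∫ t in (0:ℝ)..1, f t) = ∫ t in (0:ℝ)..1, g t := by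
    have hs := intervalIntegral.integral_sub hfint hgint
    rw [hzero] at hs
    linarith [hs]
  have hgpos : 0 < ∫ t in (0:ℝ)..1, g t := by
    refine intervalIntegral.intervalIntegral_pos_of_pos_on hgint ?_ zero_lt_one
    intro t ht
    have hV := VAux.Vfn_pos (k := k) ht
    have h1t : (0:ℝ) < 1 - t := by linarith [ht.2]
    have hB : (0:ℝ) < ((k : ℝ) + 1) ^ 2 * t + (k : ℝ) ^ 2 := by
      nlinarith [mul_pos (mul_pos hK1 hK1) ht.1]
    exact div_pos (mul_pos (mul_pos (by positivity) h1t) ht.1) (mul_pos (mul_pos hK0 hB) hV)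
  exact ⟨heq, heq ▸ hgpos⟩
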